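/- For every integer k ≥ 2, the Gallai-Ramsey number of the wheel W_5 satisfies gr_k(K_3 : W_5) ≥ 14·5^{(k−2)/2} + 1 if k is even, and gr_k(K_3 : W_5) ≥ 28·5^{(k−3)/2} + 1 if k is odd; that is, there exists a k-coloring of the edges of the complete graph on 14·5^{(k−2)/2} vertices (k even), respectively 28·5^{(k−3)/2} vertices (k odd), containing no rainbow triangle and no monochromatic copy of W_5. -/

import Mathlib

open SimpleGraph

/-- The cone over a graph: join of `K₁` with `G`. The new vertex `none` is
adjacent to every vertex of `G`. -/
def coneGraph {V : Type*} (G : SimpleGraph V) : SimpleGraph (Option V) where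
  Adj u v :=
    (u = none ∧ v ≠ none) ∨ (u ≠ none ∧ v = none) ∨
      (∃ a b, u = some a ∧ v = some b ∧ G.Adj a b)
  symm := by
    refine ⟨?_⟩
    rintro u v (⟨h1, h2⟩ | ⟨h1, h2⟩ | ⟨a, b, h1, h2, h3⟩)
    · exact Or.inr (Or.inl ⟨h2, h1⟩)
    · exact Or.inl ⟨h2, h1⟩
    · exact Or.inr (Or.inr ⟨b, a, h2, h1, h3.symm⟩)
  loopless := by
    refine ⟨?_⟩
    rintro u (⟨h1, h2⟩ | ⟨h1, h2⟩ | ⟨a, b, h1, h2, h3⟩)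
    · exact h2 h1
    · exact h1 h2
    · subst h1
      rw [Option.some_inj] at h2
      subst h2
      exact G.loopless.irrefl a h3

/-- The wheel graph `W_{m+1}`: a hub joined to every vertex of the cycle `C_m`. -/
def wheelGraph (m : ℕ) : SimpleGraph (Option (Fin m)) :=
  coneGraph (cycleGraph m)

/-- The fan graph `F_m = K₁ ∨ P_m`. -/
def fanGraph (m : ℕ) : SimpleGraph (Option (Fin m)) :=
  coneGraph (pathGraph m)

/-- An edge-coloring `c` of the complete graph on `W` contains a monochromatic
copy of `H` in color `i`. -/
def HasMonoCopy {V W α : Type*} (c : Sym2 W → α) (H : SimpleGraph V) (i : α) : Prop :=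
  ∃ f : V ↪ W, ∀ u v : V, H.Adj u v → c s(f u, f v) = i

/-- An edge-coloring `c` of the complete graph on `W` contains a rainbow triangle. -/
def HasRainbowTriangle {W α : Type*} (c : Sym2 W → α) : Prop :=
  ∃ x y z : W, x ≠ y ∧ y ≠ z ∧ x ≠ z ∧
    c s(x, y) ≠ c s(y, z) ∧ c s(y, z) ≠ c s(x, z) ∧ c s(x, y) ≠ c s(x, z)

/-- An edge-coloring `c` of the complete graph on `W` contains a rainbow copy of `G`,
i.e. a copy of `G` all of whose edges receive pairwise distinct colors. -/
def HasRainbowCopy {V W α : Type*} (c : Sym2 W → α) (G : SimpleGraph V) : Prop :=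
  ∃ f : V ↪ W, ∀ u v x y : V, G.Adj u v → G.Adj x y →
    c s(f u, f v) = c s(f x, f y) → s(u, v) = s(x, y)

/-- The two-color Ramsey number `R(G, H)`. -/
noncomputable def ramseyNumber {V₁ V₂ : Type*} (G : SimpleGraph V₁) (H : SimpleGraph V₂) : ℕ :=
  sInf {n : ℕ | ∀ c : Sym2 (Fin n) → Fin 2, HasMonoCopy c G 0 ∨ HasMonoCopy c H 1}

/-- The `k`-color Ramsey number `R_k(H)`. -/
noncomputable def multicolorRamseyNumber {V : Type*} (k : ℕ) (H : SimpleGraph V) : ℕ :=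
  sInf {n : ℕ | ∀ c : Sym2 (Fin n) → Fin k, ∃ i, HasMonoCopy c H i}

/-- The Gallai-Ramsey number `gr_k(K₃ : H)`. -/
noncomputable def gallaiRamseyK3 {V : Type*} (k : ℕ) (H : SimpleGraph V) : ℕ :=
  sInf {n : ℕ | ∀ c : Sym2 (Fin n) → Fin k,
    HasRainbowTriangle c ∨ ∃ i, HasMonoCopy c H i}

/-- The general Gallai-Ramsey number `gr_k(G : H)`. -/
noncomputable def gallaiRamsey {V₁ V₂ : Type*} (k : ℕ) (G : SimpleGraph V₁)
    (H : SimpleGraph V₂) : ℕ :=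
  sInf {n : ℕ | ∀ c : Sym2 (Fin n) → Fin k,
    HasRainbowCopy c G ∨ ∃ i, HasMonoCopy c H i}

/-!
Colourings combine by substitution: blow each vertex of a colouring `o` of `K_b` up into a copy
of a colouring of `K_n`, using fresh colours for `o`. If neither has a rainbow triangle, neither
does the blow-up. A monochromatic `W₅` in an old colour stays inside one block, as `W₅` is
connected; one in a new colour would give a monochromatic triangle of `o`, as `W₅` contains a
triangle. Start from a 2-colouring of `K₁₄` without monochromatic `W₅`; blowing up along the
2-colouring of `K₅` by a 5-cycle and its complement (a 5-cycle again, so no monochromatic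
triangle) multiplies the order by 5 for two more colours, and one blow-up along `K₂` in a single
colour settles odd `k`. The multicolour Ramsey theorem makes `gr_k(K₃ : W₅)` finite, so each
such colouring of `K_n` gives `n < gr_k(K₃ : W₅)`.
-/

open Finset

variable {V W W' α β B : Type*}

section Transport

variable {c : Sym2 W → α} {H : SimpleGraph V} {i : α}

lemma HasMonoCopy.of_comp_map (f : W' ↪ W) (h : HasMonoCopy (c ∘ Sym2.map f) H i) :
    HasMonoCopy c H i := by
  obtain ⟨g, hg⟩ := h
  exact ⟨g.trans f, fun u v huv => by simpa using hg u v huv⟩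

lemma HasRainbowTriangle.of_comp_map (f : W' ↪ W) (h : HasRainbowTriangle (c ∘ Sym2.map f)) :
    HasRainbowTriangle c := by
  obtain ⟨x, y, z, hxy, hyz, hxz, h⟩ := h
  exact ⟨f x, f y, f z, f.injective.ne hxy, f.injective.ne hyz, f.injective.ne hxz,
    by simpa using h⟩

lemma hasMonoCopy_equiv_comp_iff (e : α ≃ β) {j : β} :
    HasMonoCopy (e ∘ c) H j ↔ HasMonoCopy c H (e.symm j) := by
  simp only [HasMonoCopy, Function.comp_apply, Equiv.eq_symm_apply]

lemma hasRainbowTriangle_comp_iff {e : α → β} (he : Function.Injective e) :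
    HasRainbowTriangle (e ∘ c) ↔ HasRainbowTriangle c := by
  simp only [HasRainbowTriangle, Function.comp_apply, he.ne_iff]

lemma not_hasRainbowTriangle_of_card_le_two [Fintype α] [DecidableEq α]
    (hα : Fintype.card α ≤ 2) (c : Sym2 W → α) : ¬ HasRainbowTriangle c := by
  rintro ⟨x, y, z, -, -, -, h₁, h₂, h₃⟩
  have hcard : #{c s(x, y), c s(y, z), c s(x, z)} = 3 :=
    card_eq_three.mpr ⟨_, _, _, h₁, h₃, h₂, rfl⟩
  have := card_le_univ {c s(x, y), c s(y, z), c s(x, z)}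
  omega

end Transport

def IsMonoFreeGallaiColoring (c : Sym2 W → α) (H : SimpleGraph V) : Prop :=
  ¬ HasRainbowTriangle c ∧ ∀ i, ¬ HasMonoCopy c H i

namespace IsMonoFreeGallaiColoring

variable {c : Sym2 W → α} {H : SimpleGraph V}

lemma comap (hc : IsMonoFreeGallaiColoring c H) (f : W' ↪ W) :
    IsMonoFreeGallaiColoring (c ∘ Sym2.map f) H :=
  ⟨fun h => hc.1 (h.of_comp_map f), fun i h => hc.2 i (h.of_comp_map f)⟩

lemma equiv_comp (hc : IsMonoFreeGallaiColoring c H) (e : α ≃ β) :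
    IsMonoFreeGallaiColoring (e ∘ c) H :=
  ⟨(hasRainbowTriangle_comp_iff e.injective).not.mpr hc.1,
    fun _ => (hasMonoCopy_equiv_comp_iff e).not.mpr (hc.2 _)⟩

end IsMonoFreeGallaiColoring

def HasMonoTriangle (c : Sym2 W → α) : Prop :=
  ∃ x y z : W, x ≠ y ∧ y ≠ z ∧ x ≠ z ∧ c s(x, y) = c s(y, z) ∧ c s(y, z) = c s(x, z)

section BlowUp

variable [DecidableEq B] (o : Sym2 B → β) (c : Sym2 W → α)

def blowUp : Sym2 (B × W) → α ⊕ β :=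
  Sym2.lift ⟨fun u v => if u.1 = v.1 then .inl (c s(u.2, v.2)) else .inr (o s(u.1, v.1)),
    fun u v => by simp only [eq_comm (a := u.1), Sym2.eq_swap]⟩

variable {o c}

lemma blowUp_mk (u v : B × W) : blowUp o c s(u, v) =
    if u.1 = v.1 then .inl (c s(u.2, v.2)) else .inr (o s(u.1, v.1)) := rfl

lemma blowUp_eq_inl_iff {u v : B × W} {i : α} :
    blowUp o c s(u, v) = .inl i ↔ u.1 = v.1 ∧ c s(u.2, v.2) = i := by
  by_cases h : u.1 = v.1 <;> simp [blowUp_mk, h]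

lemma blowUp_eq_inr_iff {u v : B × W} {j : β} :
    blowUp o c s(u, v) = .inr j ↔ u.1 ≠ v.1 ∧ o s(u.1, v.1) = j := by
  by_cases h : u.1 = v.1 <;> simp [blowUp_mk, h]

lemma blowUp_mk_congr_left {u v w : B × W} (h : u.1 = v.1) (hw : u.1 ≠ w.1) :
    blowUp o c s(u, w) = blowUp o c s(v, w) := by
  rw [blowUp_mk, blowUp_mk, ← h, if_neg hw, if_neg hw]

/-- A rainbow triangle of the blow-up lies inside one block or meets three blocks: two vertices
of one block see any other block in a single colour. -/
lemma not_hasRainbowTriangle_blowUp (ho : ¬ HasRainbowTriangle o)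
    (hc : ¬ HasRainbowTriangle c) : ¬ HasRainbowTriangle (blowUp o c) := by
  rintro ⟨x, y, z, hxy, hyz, hxz, h₁, h₂, h₃⟩
  by_cases exy : x.1 = y.1
  · by_cases eyz : y.1 = z.1
    · have exz := exy.trans eyz
      simp only [blowUp_mk, exy, eyz, if_true, ne_eq, Sum.inl.injEq] at h₁ h₂ h₃
      exact hc ⟨x.2, y.2, z.2, fun h => hxy (Prod.ext exy h), fun h => hyz (Prod.ext eyz h),
        fun h => hxz (Prod.ext exz h), h₁, h₂, h₃⟩
    · exact h₂ (blowUp_mk_congr_left exy.symm eyz)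
  · by_cases eyz : y.1 = z.1
    · rw [Sym2.eq_swap, Sym2.eq_swap (a := x)] at h₃
      exact h₃ (blowUp_mk_congr_left eyz (Ne.symm exy))
    · by_cases exz : x.1 = z.1
      · rw [Sym2.eq_swap (a := y)] at h₁
        exact h₁ (blowUp_mk_congr_left exz exy)
      · simp only [blowUp_mk, exy, eyz, exz, if_false, ne_eq, Sum.inr.injEq] at h₁ h₂ h₃
        exact ho ⟨x.1, y.1, z.1, exy, eyz, exz, h₁, h₂, h₃⟩

variable {H : SimpleGraph V}

lemma not_hasMonoCopy_blowUp_inl (hH : H.Connected) {i : α} (hc : ¬ HasMonoCopy c H i) :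
    ¬ HasMonoCopy (blowUp o c) H (.inl i) := by
  rintro ⟨f, hf⟩
  have hblock (u v : V) : (f u).1 = (f v).1 := by
    induction (reachable_iff_reflTransGen u v).mp (hH u v) with
    | refl => rfl
    | tail _ hadj ih => exact ih.trans (blowUp_eq_inl_iff.mp (hf _ _ hadj)).1
  exact hc ⟨⟨fun u => (f u).2, fun u v h => f.injective (Prod.ext (hblock u v) h)⟩,
    fun u v huv => (blowUp_eq_inl_iff.mp (hf u v huv)).2⟩

lemma not_hasMonoCopy_blowUp_inr (hH : ¬ H.CliqueFree 3) (ho : ¬ HasMonoTriangle o) (j : β) :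
    ¬ HasMonoCopy (blowUp o c) H (.inr j) := by
  rintro ⟨f, hf⟩
  classical
  obtain ⟨t, ht⟩ : ∃ t, H.IsNClique 3 t := by simpa [CliqueFree] using hH
  obtain ⟨a, b, d, hab, had, hbd, rfl⟩ := is3Clique_iff.mp ht
  obtain ⟨nab, cab⟩ := blowUp_eq_inr_iff.mp (hf _ _ hab)
  obtain ⟨nbd, cbd⟩ := blowUp_eq_inr_iff.mp (hf _ _ hbd)
  obtain ⟨nad, cad⟩ := blowUp_eq_inr_iff.mp (hf _ _ had)
  exact ho ⟨(f a).1, (f b).1, (f d).1, nab, nbd, nad, cab.trans cbd.symm, cbd.trans cad.symm⟩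

lemma IsMonoFreeGallaiColoring.blowUp (hH : H.Connected) (hH₃ : ¬ H.CliqueFree 3)
    (ho : ¬ HasRainbowTriangle o) (ho₃ : ¬ HasMonoTriangle o)
    (hc : IsMonoFreeGallaiColoring c H) :
    IsMonoFreeGallaiColoring (blowUp o c) H := by
  refine ⟨not_hasRainbowTriangle_blowUp ho hc.1, ?_⟩
  rintro (i | j)
  exacts [not_hasMonoCopy_blowUp_inl hH (hc.2 i), not_hasMonoCopy_blowUp_inr hH₃ ho₃ j]

end BlowUp

variable {H : SimpleGraph V}

lemma IsMonoFreeGallaiColoring.exists_fin_mul {b m n k : ℕ} (hH : H.Connected)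
    (hH₃ : ¬ H.CliqueFree 3) {o : Sym2 (Fin b) → Fin m} (ho : ¬ HasRainbowTriangle o)
    (ho₃ : ¬ HasMonoTriangle o) {c : Sym2 (Fin n) → Fin k}
    (hc : IsMonoFreeGallaiColoring c H) :
    ∃ c' : Sym2 (Fin (b * n)) → Fin (k + m), IsMonoFreeGallaiColoring c' H :=
  ⟨_, ((hc.blowUp hH hH₃ ho ho₃).equiv_comp finSumFinEquiv).comap
    finProdFinEquiv.symm.toEmbedding⟩

lemma hasMonoCopy_of_pairwise [Fintype V] {c : Sym2 W → α} {T : Finset W} {i : α}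
    (hT : (T : Set W).Pairwise fun x y => c s(x, y) = i) (hV : Fintype.card V ≤ #T) :
    HasMonoCopy c H i := by
  obtain ⟨e⟩ := Function.Embedding.nonempty_of_card_le (hV.trans (Fintype.card_coe T).ge)
  exact ⟨e.trans (Function.Embedding.subtype _), fun u v huv =>
    hT (e u).2 (e v).2 fun h => huv.ne (e.injective (Subtype.ext h))⟩

section Ramsey

variable [Fintype α]

lemma exists_seq_color_eq_of_lt [DecidableEq W] (c : Sym2 W → α) (m : ℕ) (s : Finset W)
    (hs : (Fintype.card α + 1) ^ m ≤ #s) :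
    ∃ (x : Fin m → W) (col : Fin m → α), Function.Injective x ∧ (∀ i, x i ∈ s) ∧
      ∀ i j, i < j → c s(x i, x j) = col i := by
  induction m generalizing s with
  | zero => exact ⟨Fin.elim0, Fin.elim0, fun i => i.elim0, fun i => i.elim0, fun i => i.elim0⟩
  | succ m ih =>
    classical
    have hpow : 1 ≤ (Fintype.card α + 1) ^ m := Nat.one_le_pow _ _ (Nat.succ_pos _)
    rw [pow_succ] at hs
    obtain ⟨v, hv⟩ : s.Nonempty := card_pos.mp (by nlinarith)
    have : Nonempty α := ⟨c s(v, v)⟩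
    obtain ⟨a, -, ha⟩ := exists_le_card_fiber_of_mul_le_card_of_maps_to
      (s := s.erase v) (f := fun w => c s(v, w)) (n := (Fintype.card α + 1) ^ m)
      (fun _ _ => mem_univ _) univ_nonempty
      (by rw [card_univ, card_erase_of_mem hv]; exact Nat.le_sub_one_of_lt (by nlinarith))
    obtain ⟨x, col, hinj, hmem, hcol⟩ := ih _ ha
    have hmem' (i : Fin m) : x i ∈ s.erase v ∧ c s(v, x i) = a := mem_filter.mp (hmem i)
    refine ⟨Fin.cons v x, Fin.cons a col, ?_, ?_, ?_⟩
    · refine Fin.cons_injective_iff.mpr ⟨?_, hinj⟩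
      rintro ⟨i, hi⟩
      exact notMem_erase v s (hi ▸ (hmem' i).1)
    · intro i
      induction i using Fin.cases with
      | zero => exact hv
      | succ i => exact mem_of_mem_erase (hmem' i).1
    · intro i j hij
      induction j using Fin.cases with
      | zero => exact absurd hij (Fin.not_lt_zero i)
      | succ j =>
        induction i using Fin.cases with
        | zero => exact (hmem' j).2
        | succ i => exact hcol i j (Fin.succ_lt_succ_iff.mp hij)

/-- Among the first `card α * r` terms of a sequence from `exists_seq_color_eq_of_lt`, `r` share
their colour; together with the last term they span a monochromatic clique. -/
lemma exists_monochromatic_finset [Fintype W] (c : Sym2 W → α) (r : ℕ)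
    (hW : (Fintype.card α + 1) ^ (Fintype.card α * r + 1) ≤ Fintype.card W) :
    ∃ i, ∃ T : Finset W, #T = r + 1 ∧ (T : Set W).Pairwise fun x y => c s(x, y) = i := by
  classical
  obtain ⟨x, col, hinj, -, hcol⟩ := exists_seq_color_eq_of_lt c _ univ hW
  have : Nonempty α := ⟨c s(x 0, x 0)⟩
  obtain ⟨i, -, hi⟩ := exists_le_card_fiber_of_mul_le_card_of_maps_to
    (s := (univ : Finset (Fin (Fintype.card α * r)))) (f := fun a => col a.castSucc) (n := r)
    (fun _ _ => mem_univ _) univ_nonempty (by simp)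
  obtain ⟨F, hF, hFcard⟩ := exists_subset_card_eq hi
  let A := cons (Fin.last _) (F.map Fin.castSuccEmb) (by simp [Fin.castSucc_ne_last])
  have hA : ∀ a ∈ A, ∀ b ∈ A, a < b → c s(x a, x b) = i := by
    intro a ha b _ hab
    obtain rfl | ha := mem_cons.mp ha
    · exact absurd hab (not_lt_of_ge (Fin.le_last b))
    obtain ⟨a, haF, rfl⟩ := mem_map.mp ha
    exact (hcol _ _ hab).trans (mem_filter.mp (hF haF)).2
  refine ⟨i, A.map ⟨x, hinj⟩, by simp [A, hFcard], ?_⟩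
  simp only [coe_map, Set.Pairwise, Set.mem_image, mem_coe]
  rintro _ ⟨a, ha, rfl⟩ _ ⟨b, hb, rfl⟩ hne
  rcases lt_or_gt_of_ne (fun h => hne (congrArg x h)) with hab | hab
  · exact hA a ha b hb hab
  · rw [Sym2.eq_swap]
    exact hA b hb a ha hab

theorem exists_forall_hasMonoCopy [Fintype V] (H : SimpleGraph V) (α : Type*) [Fintype α] :
    ∃ N, ∀ c : Sym2 (Fin N) → α, ∃ i, HasMonoCopy c H i := by
  refine ⟨(Fintype.card α + 1) ^ (Fintype.card α * Fintype.card V + 1), fun c => ?_⟩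
  obtain ⟨i, T, hT, hpw⟩ := exists_monochromatic_finset c (Fintype.card V) (by simp)
  exact ⟨i, hasMonoCopy_of_pairwise hpw (by omega)⟩

end Ramsey

theorem IsMonoFreeGallaiColoring.lt_gallaiRamseyK3 [Fintype V] {n k : ℕ}
    {c : Sym2 (Fin n) → Fin k} (hc : IsMonoFreeGallaiColoring c H) :
    n < gallaiRamseyK3 k H := by
  obtain ⟨N, hN⟩ := exists_forall_hasMonoCopy H (Fin k)
  show n + 1 ≤ sInf _
  refine le_csInf ⟨N, fun c => Or.inr (hN c)⟩ fun m hm => ?_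
  by_contra! hmn
  have hc' := hc.comap (Fin.castLEEmb (Nat.le_of_lt_succ hmn))
  rcases hm _ with h | ⟨i, h⟩
  exacts [hc'.1 h, hc'.2 i h]

section Cone

variable (G : SimpleGraph V)

lemma coneGraph_adj_none_some (v : V) : (coneGraph G).Adj none (some v) :=
  Or.inl ⟨rfl, Option.some_ne_none v⟩

variable {G} in
lemma coneGraph_adj_some_some {a b : V} (h : G.Adj a b) : (coneGraph G).Adj (some a) (some b) :=
  Or.inr (Or.inr ⟨a, b, rfl, rfl, h⟩)

lemma coneGraph_connected : (coneGraph G).Connected := by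
  have h (u : Option V) : (coneGraph G).Reachable none u := by
    cases u with
    | none => rfl
    | some v => exact (coneGraph_adj_none_some G v).reachable
  exact ⟨fun u v => (h u).symm.trans (h v)⟩

variable {G} in
lemma not_cliqueFree_three_coneGraph {a b : V} (h : G.Adj a b) :
    ¬ (coneGraph G).CliqueFree 3 := by
  classical
  exact fun hG => hG {none, some a, some b} (is3Clique_triple_iff.mpr
    ⟨coneGraph_adj_none_some G a, coneGraph_adj_none_some G b, coneGraph_adj_some_some h⟩)

end Cone

def graphColoring (G : SimpleGraph W) [DecidableRel G.Adj] : Sym2 W → Fin 2 :=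
  Sym2.lift ⟨fun x y => if G.Adj x y then 0 else 1, fun x y => by simp only [G.adj_comm]⟩

lemma HasMonoCopy.exists_apply_eq_zero [AddGroup W] {c : Sym2 W → α} {H : SimpleGraph V}
    {i : α} (hc : ∀ x y d, c s(x + d, y + d) = c s(x, y)) (h : HasMonoCopy c H i) (v : V) :
    ∃ f : V ↪ W, f v = 0 ∧ ∀ u w, H.Adj u w → c s(f u, f w) = i := by
  obtain ⟨f, hf⟩ := h
  exact ⟨f.trans (Equiv.addRight (-f v)).toEmbedding, by simp,
    fun u w huw => by simpa [hc] using hf u w huw⟩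

/-- The circulant graph `C₁₄(1, 2, 6)`; it and its complement are `W₅`-free, witnessing
`R(W₅, W₅) > 14`. -/
abbrev circulant14 : SimpleGraph (Fin 14) := circulantGraph {1, 2, 6}

lemma graphColoring_circulant14_add (x y d : Fin 14) :
    graphColoring circulant14 s(x + d, y + d) = graphColoring circulant14 s(x, y) := by
  simp only [graphColoring, Sym2.lift_mk, circulantGraph_adj_translate]

lemma graphColoring_circulant14_no_wheel_at_zero :
    ∀ i : Fin 2, ∀ a : Fin 14, a ≠ 0 → graphColoring circulant14 s(0, a) = i →
    ∀ b, b ≠ 0 → b ≠ a → graphColoring circulant14 s(0, b) = i →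
      graphColoring circulant14 s(a, b) = i →
    ∀ d, d ≠ 0 → d ≠ a → d ≠ b → graphColoring circulant14 s(0, d) = i →
      graphColoring circulant14 s(b, d) = i →
    ∀ e, e ≠ 0 → e ≠ a → e ≠ b → e ≠ d → graphColoring circulant14 s(0, e) = i →
      graphColoring circulant14 s(d, e) = i → graphColoring circulant14 s(e, a) ≠ i := by
  decide

lemma isMonoFreeGallaiColoring_circulant14 :
    IsMonoFreeGallaiColoring (graphColoring circulant14) (wheelGraph 4) := by
  refine ⟨not_hasRainbowTriangle_of_card_le_two (by simp) _, fun i h => ?_⟩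
  obtain ⟨f, hf0, hf⟩ := h.exists_apply_eq_zero graphColoring_circulant14_add none
  have hub (j : Fin 4) := hf0 ▸ hf _ _ (coneGraph_adj_none_some _ j)
  have rim {j j' : Fin 4} (h : (cycleGraph 4).Adj j j') := hf _ _ (coneGraph_adj_some_some h)
  have ne {u v : Option (Fin 4)} (h : u ≠ v) : f u ≠ f v := f.injective.ne h
  have ne0 (j : Fin 4) : f (some j) ≠ 0 := hf0 ▸ ne (Option.some_ne_none j)
  exact graphColoring_circulant14_no_wheel_at_zero i
    _ (ne0 0) (hub 0) _ (ne0 1) (ne (by decide)) (hub 1) (rim (by decide))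
    _ (ne0 2) (ne (by decide)) (ne (by decide)) (hub 2) (rim (by decide))
    _ (ne0 3) (ne (by decide)) (ne (by decide)) (ne (by decide)) (hub 3) (rim (by decide))
    (rim (by decide))

lemma wheelGraph_connected (m : ℕ) : (wheelGraph m).Connected :=
  coneGraph_connected _

lemma not_cliqueFree_three_wheelGraph_four : ¬ (wheelGraph 4).CliqueFree 3 :=
  not_cliqueFree_three_coneGraph (by decide : (cycleGraph 4).Adj 0 1)

section WheelFree

variable {n k : ℕ}

lemma exists_wheel_free_mul_five
    (h : ∃ c : Sym2 (Fin n) → Fin k, IsMonoFreeGallaiColoring c (wheelGraph 4)) :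
    ∃ c : Sym2 (Fin (5 * n)) → Fin (k + 2), IsMonoFreeGallaiColoring c (wheelGraph 4) :=
  have ⟨_, hc⟩ := h
  hc.exists_fin_mul (wheelGraph_connected 4) not_cliqueFree_three_wheelGraph_four
    (not_hasRainbowTriangle_of_card_le_two (by simp) (graphColoring (cycleGraph 5)))
    (by unfold HasMonoTriangle; decide)

lemma exists_wheel_free_mul_two
    (h : ∃ c : Sym2 (Fin n) → Fin k, IsMonoFreeGallaiColoring c (wheelGraph 4)) :
    ∃ c : Sym2 (Fin (2 * n)) → Fin (k + 1), IsMonoFreeGallaiColoring c (wheelGraph 4) :=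
  have ⟨_, hc⟩ := h
  hc.exists_fin_mul (wheelGraph_connected 4) not_cliqueFree_three_wheelGraph_four
    (o := fun _ : Sym2 (Fin 2) => (0 : Fin 1))
    (not_hasRainbowTriangle_of_card_le_two (by simp) _) (by unfold HasMonoTriangle; decide)

lemma exists_wheel_free_even (j : ℕ) : ∃ c : Sym2 (Fin (14 * 5 ^ j)) → Fin (2 + 2 * j),
    IsMonoFreeGallaiColoring c (wheelGraph 4) := by
  induction j with
  | zero => exact ⟨_, isMonoFreeGallaiColoring_circulant14⟩
  | succ j ih =>
    rw [show 14 * 5 ^ (j + 1) = 5 * (14 * 5 ^ j) by ring,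
      show 2 + 2 * (j + 1) = 2 + 2 * j + 2 by ring]
    exact exists_wheel_free_mul_five ih

lemma exists_wheel_free_odd (j : ℕ) : ∃ c : Sym2 (Fin (28 * 5 ^ j)) → Fin (3 + 2 * j),
    IsMonoFreeGallaiColoring c (wheelGraph 4) := by
  induction j with
  | zero => exact exists_wheel_free_mul_two ⟨_, isMonoFreeGallaiColoring_circulant14⟩
  | succ j ih =>
    rw [show 28 * 5 ^ (j + 1) = 5 * (28 * 5 ^ j) by ring,
      show 3 + 2 * (j + 1) = 3 + 2 * j + 2 by ring]
    exact exists_wheel_free_mul_five ih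

end WheelFree

/-- For every integer `k ≥ 2`, `gr_k(K₃ : W₅) ≥ 14·5^{(k−2)/2} + 1` if `k`
is even and `gr_k(K₃ : W₅) ≥ 28·5^{(k−3)/2} + 1` if `k` is odd; that is, there exists a
`k`-coloring of the complete graph on `14·5^{(k−2)/2}` (resp. `28·5^{(k−3)/2}`) vertices
with no rainbow triangle and no monochromatic copy of `W₅`. -/
theorem gallaiRamsey_W5_lower (k : ℕ) (hk : 2 ≤ k) :
    (Even k → 14 * 5 ^ ((k - 2) / 2) + 1 ≤ gallaiRamseyK3 k (wheelGraph 4) ∧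
      ∃ c : Sym2 (Fin (14 * 5 ^ ((k - 2) / 2))) → Fin k,
        ¬ HasRainbowTriangle c ∧ ∀ i, ¬ HasMonoCopy c (wheelGraph 4) i) ∧
    (Odd k → 28 * 5 ^ ((k - 3) / 2) + 1 ≤ gallaiRamseyK3 k (wheelGraph 4) ∧
      ∃ c : Sym2 (Fin (28 * 5 ^ ((k - 3) / 2))) → Fin k,
        ¬ HasRainbowTriangle c ∧ ∀ i, ¬ HasMonoCopy c (wheelGraph 4) i) := by
  refine ⟨fun hk_even => ?_, fun hk_odd => ?_⟩
  · have h := exists_wheel_free_even ((k - 2) / 2)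
    rw [show 2 + 2 * ((k - 2) / 2) = k by obtain ⟨r, rfl⟩ := hk_even; omega] at h
    obtain ⟨c, hc⟩ := h
    exact ⟨hc.lt_gallaiRamseyK3, c, hc⟩
  · have h := exists_wheel_free_odd ((k - 3) / 2)
    rw [show 3 + 2 * ((k - 3) / 2) = k by obtain ⟨r, rfl⟩ := hk_odd; omega] at h
    obtain ⟨c, hc⟩ := h
    exact ⟨hc.lt_gallaiRamseyK3, c, hc⟩
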